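/- Let m ≥ 0, and let n, e, h, a be positive integers with 3^{m+1} ≤ n < 2·3^{m+1}, e < 3^h, and h ≥ m+2. Then k(3^{h+1}a + n, e) ≡ k(n,e) (mod 9). -/

import Mathlib

/-- The cardinality of the `n`-dimensional Lee ball of radius `e`. -/
def leeK (n e : ℕ) : ℕ := ∑ i ∈ Finset.range (min n e + 1), 2 ^ i * n.choose i * e.choose i

/-!
By Vandermonde, `C(N + n, i) = ∑_{j ≤ i} C(N, j) C(n, i - j)`. If `p ^ (h + 1) ∣ N` and
`0 < j < p ^ h`, the bound `v_p(N) ≤ v_p(C(N, j)) + v_p(j)` together with `v_p(j) < h` gives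
`p ^ 2 ∣ C(N, j)`, so only the `j = 0` term survives modulo `p ^ 2`. Every binomial coefficient
`C(·, i)` occurring in `leeK · e` has `i ≤ e < p ^ h`.
-/

namespace Nat

variable {p h N : ℕ}

theorem sq_dvd_choose_of_pow_succ_dvd (hp : p.Prime) (hN : p ^ (h + 1) ∣ N) {j : ℕ}
    (hj0 : j ≠ 0) (hj : j < p ^ h) : p ^ 2 ∣ N.choose j := by
  rcases lt_or_ge N j with hNj | hjN
  · simp [choose_eq_zero_of_lt hNj]
  have hvN : h + 1 ≤ N.factorization p := (hp.pow_dvd_iff_le_factorization (by omega)).1 hN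
  have hvj : j.factorization p < h :=
    (Nat.pow_lt_pow_iff_right hp.one_lt).1 ((ordProj_le p hj0).trans_lt hj)
  have hkummer := factorization_le_factorization_choose_add (p := p) hjN hj0
  rw [hp.pow_dvd_iff_le_factorization (choose_pos hjN).ne']
  omega

theorem choose_add_modEq_of_pow_succ_dvd (hp : p.Prime) (hN : p ^ (h + 1) ∣ N) (n : ℕ)
    {i : ℕ} (hi : i < p ^ h) : (N + n).choose i ≡ n.choose i [MOD p ^ 2] := by
  rw [add_choose_eq]
  refine (Nat.sum_modEq_single (a := (0, i)) (by simp) fun ⟨j, k⟩ hjk hne => ?_).trans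
    (by rw [choose_zero_right, one_mul])
  rw [Finset.HasAntidiagonal.mem_antidiagonal] at hjk
  have hj0 : j ≠ 0 := by
    rintro rfl
    exact hne (by rw [← hjk, zero_add])
  exact modEq_zero_iff_dvd.2
    (Dvd.dvd.mul_right (sq_dvd_choose_of_pow_succ_dvd hp hN hj0 (by omega)) _)

end Nat

theorem leeK_eq_sum_range (n e : ℕ) :
    leeK n e = ∑ i ∈ Finset.range (e + 1), 2 ^ i * n.choose i * e.choose i := by
  refine Finset.sum_subset (fun i hi => ?_) fun i hi hi' => ?_
  · simp only [Finset.mem_range] at hi ⊢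
    omega
  · simp only [Finset.mem_range] at hi hi'
    simp [Nat.choose_eq_zero_of_lt (show n < i by omega)]

theorem leeK_add_modEq_of_pow_succ_dvd {p h N : ℕ} (hp : p.Prime) (hN : p ^ (h + 1) ∣ N)
    (n : ℕ) {e : ℕ} (he : e < p ^ h) : leeK (N + n) e ≡ leeK n e [MOD p ^ 2] := by
  rw [leeK_eq_sum_range, leeK_eq_sum_range]
  refine Nat.ModEq.sum fun i hi => ?_
  have hi : i < p ^ h := by rw [Finset.mem_range] at hi; omega
  exact ((Nat.choose_add_modEq_of_pow_succ_dvd hp hN n hi).mul_left _).mul_right _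

theorem leeK_periodicity_mod_nine_general (n e h a : ℕ) (helt : e < 3 ^ h) :
    leeK (3 ^ (h + 1) * a + n) e ≡ leeK n e [MOD 9] :=
  leeK_add_modEq_of_pow_succ_dvd Nat.prime_three (dvd_mul_right _ a) n helt

theorem leeK_periodicity_mod_nine (m n e h a : ℕ) (hn : 0 < n) (he : 0 < e)
    (hh0 : 0 < h) (ha : 0 < a) (hn1 : 3 ^ (m + 1) ≤ n) (hn2 : n < 2 * 3 ^ (m + 1))
    (helt : e < 3 ^ h) (hh : m + 2 ≤ h) :
    leeK (3 ^ (h + 1) * a + n) e ≡ leeK n e [MOD 9] :=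
  leeK_periodicity_mod_nine_general n e h a helt
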